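/- arXiv:1410.0609 — 2 statements merged into one kernel-verified Lean document; each statement's English description precedes it below -/
import Mathlib

section
/- Let Ω be a linear symplectic form on ℂ^n such that the restriction of Ω to each coordinate subspace ℂ^n_I = {z ∈ ℂ^n : z_i = 0 for all i ∈ I} is nondegenerate, and such that the orientation induced by Ω on each ℂ^n_I agrees with its complex orientation. Then for every i ∈ {1,...,n}, every s ≥ 0, and every subset I ⊆ {1,...,n}, the 2-form Ω + s·dx_i∧dy_i restricted to ℂ^n_I is nondegenerate. -/
set_option synthInstance.maxHeartbeats 1000000
set_option maxHeartbeats 1000000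

open ExteriorAlgebra

/-- The real-linear functional `dx_i = Re ∘ z_i` on `ℂ^n`. -/
noncomputable def dxF (n : ℕ) (i : Fin n) : Module.Dual ℝ (Fin n → ℂ) :=
  Complex.reLm.comp ((LinearMap.proj i : (Fin n → ℂ) →ₗ[ℂ] ℂ).restrictScalars ℝ)

/-- The real-linear functional `dy_i = Im ∘ z_i` on `ℂ^n`. -/
noncomputable def dyF (n : ℕ) (i : Fin n) : Module.Dual ℝ (Fin n → ℂ) :=
  Complex.imLm.comp ((LinearMap.proj i : (Fin n → ℂ) →ₗ[ℂ] ℂ).restrictScalars ℝ)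

/-- `dx_i` as a degree-1 element of the exterior algebra of the dual of `ℂ^n`. -/
noncomputable def dxE (n : ℕ) (i : Fin n) :
    ExteriorAlgebra ℝ (Module.Dual ℝ (Fin n → ℂ)) :=
  ExteriorAlgebra.ι ℝ (dxF n i)

/-- `dy_i` as a degree-1 element of the exterior algebra of the dual of `ℂ^n`. -/
noncomputable def dyE (n : ℕ) (i : Fin n) :
    ExteriorAlgebra ℝ (Module.Dual ℝ (Fin n → ℂ)) :=
  ExteriorAlgebra.ι ℝ (dyF n i)

/-- The coordinate area form `dx_i ∧ dy_i`. -/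
noncomputable def dxyE (n : ℕ) (i : Fin n) :
    ExteriorAlgebra ℝ (Module.Dual ℝ (Fin n → ℂ)) :=
  dxE n i * dyE n i

/-- The complex volume form of the coordinate subspace `ℂ^n_I`: the wedge of
`dx_i ∧ dy_i` over `i ∉ I` (in increasing order). -/
noncomputable def volForm (n : ℕ) (I : Finset (Fin n)) :
    ExteriorAlgebra ℝ (Module.Dual ℝ (Fin n → ℂ)) :=
  (((Iᶜ).sort (· ≤ ·)).map fun i => dxyE n i).prod

/-- The projection of `ℂ^n` onto the coordinate subspace `ℂ^n_I` (setting the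
coordinates in `I` to zero). -/
noncomputable def coordProj (n : ℕ) (I : Finset (Fin n)) :
    (Fin n → ℂ) →ₗ[ℝ] (Fin n → ℂ) where
  toFun z := fun i => if i ∈ I then 0 else z i
  map_add' := by intro a b; funext i; by_cases h : i ∈ I <;> simp [h]
  map_smul' := by intro c a; funext i; by_cases h : i ∈ I <;> simp [h]

/-- Pullback of exterior forms on `ℂ^n` along the projection onto `ℂ^n_I`; this computes
the restriction of a form to the coordinate subspace `ℂ^n_I`. -/
noncomputable def pullbackI (n : ℕ) (I : Finset (Fin n)) :
    ExteriorAlgebra ℝ (Module.Dual ℝ (Fin n → ℂ)) →ₐ[ℝ]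
      ExteriorAlgebra ℝ (Module.Dual ℝ (Fin n → ℂ)) :=
  ExteriorAlgebra.map ((coordProj n I).dualMap)

/-- The subspace of genuine (grade-2) alternating 2-forms inside the exterior algebra. -/
noncomputable def grade2 (n : ℕ) :
    Submodule ℝ (ExteriorAlgebra ℝ (Module.Dual ℝ (Fin n → ℂ))) :=
  LinearMap.range (ExteriorAlgebra.ι ℝ (M := Module.Dual ℝ (Fin n → ℂ))) ^ 2

/-! For `i ∈ I` the form `dx_i ∧ dy_i` restricts to zero on `ℂ^n_I`. For `i ∉ I`, put
`A = Ω|_{ℂ^n_I}` and `B = dx_i ∧ dy_i`, and let `m + 1` be the complex dimension of `ℂ^n_I`.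
Since `B` is central of square zero, `(A + sB)^(m+1) = A^(m+1) + (m+1) s A^m B`. Wedging with `B`
kills `dx_i` and `dy_i`, so `A^m B = (Ω|_{ℂ^n_{I ∪ {i}}})^m B`, a positive multiple of
`vol_{I ∪ {i}} ∧ B = vol_I`. Hence `(A + sB)^(m+1)` is a positive multiple of `vol_I ≠ 0`. -/

theorem Commute.add_pow_succ_of_mul_self_eq_zero {A : Type*} [Semiring A] {a b : A}
    (h : Commute a b) (hb : b * b = 0) (m : ℕ) :
    (a + b) ^ (m + 1) = a ^ (m + 1) + (m + 1) • (a ^ m * b) := by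
  induction m with
  | zero => simp
  | succ k ih =>
    have hab : a ^ k * b * a = a ^ (k + 1) * b := by
      rw [mul_assoc, ← h.eq, ← mul_assoc, ← pow_succ]
    rw [pow_succ, ih, add_mul, mul_add, mul_add, smul_mul_assoc, smul_mul_assoc, hab,
      mul_assoc _ b b, hb, mul_zero, smul_zero, add_zero, ← pow_succ, succ_nsmul _ (k + 1)]
    abel

namespace ExteriorAlgebra

variable {R M : Type*} [CommRing R] [AddCommGroup M] [Module R M]

theorem ι_mul_ι_comm (a b : M) : ι R a * ι R b = -(ι R b * ι R a) :=
  eq_neg_of_add_eq_zero_left (ι_add_mul_swap a b)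

theorem commute_ι_mul_ι (a b : M) (x : ExteriorAlgebra R M) : Commute (ι R a * ι R b) x := by
  induction x using ExteriorAlgebra.induction with
  | algebraMap r => exact Algebra.commute_algebraMap_right r _
  | add x y hx hy => exact hx.add_right hy
  | mul x y hx hy => exact hx.mul_right hy
  | ι m =>
    change _ = _
    rw [mul_assoc, ι_mul_ι_comm b m, mul_neg, ← mul_assoc, ι_mul_ι_comm a m, neg_mul, neg_neg,
      mul_assoc]

theorem ι_mul_ι_mul_self (a b : M) : (ι R a * ι R b) * (ι R a * ι R b) = 0 := by
  rw [← mul_assoc, (commute_ι_mul_ι a b (ι R a)).eq, ← mul_assoc, ι_sq_zero, zero_mul,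
    zero_mul]

theorem ι_mul_ι_mul_ι_of_mem_span {a b x : M} (hx : x ∈ Submodule.span R {a, b}) :
    ι R x * (ι R a * ι R b) = 0 := by
  have ha : ι R a * (ι R a * ι R b) = 0 := by rw [← mul_assoc, ι_sq_zero, zero_mul]
  have hb : ι R b * (ι R a * ι R b) = 0 := by
    rw [← mul_assoc, ι_mul_ι_comm b a, neg_mul, mul_assoc, ι_sq_zero, mul_zero, neg_zero]
  obtain ⟨r, s, rfl⟩ := Submodule.mem_span_pair.mp hx
  rw [map_add, map_smul, map_smul, add_mul, smul_mul_assoc, smul_mul_assoc, ha, hb, smul_zero,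
    smul_zero, add_zero]

theorem contractLeft_ι_mul (d : Module.Dual R M) (a : M) (x : ExteriorAlgebra R M) :
    CliffordAlgebra.contractLeft d (ι R a * x) =
      d a • x - ι R a * CliffordAlgebra.contractLeft d x :=
  CliffordAlgebra.contractLeft_ι_mul d a x

theorem algHom_mul_eq_of_ι_mul_eq {A : Type*} [Semiring A] [Algebra R A]
    {f g : ExteriorAlgebra R M →ₐ[R] A} {c : A} (hc : ∀ x, Commute c (g x))
    (hfg : ∀ m, f (ι R m) * c = g (ι R m) * c) (x : ExteriorAlgebra R M) :
    f x * c = g x * c := by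
  induction x using ExteriorAlgebra.induction with
  | algebraMap r => rw [AlgHom.commutes, AlgHom.commutes]
  | ι m => exact hfg m
  | add x y hx hy => rw [map_add, map_add, add_mul, add_mul, hx, hy]
  | mul x y hx hy =>
    rw [map_mul, map_mul, mul_assoc, hy, ← (hc y).eq, ← mul_assoc, hx, mul_assoc, (hc y).eq,
      mul_assoc]

theorem contractLeft_prod_ι_mul_ι_eq_zero {κ : Type*} (a b : κ → M) (d : Module.Dual R M)
    (L : List κ) (hL : ∀ k ∈ L, d (a k) = 0 ∧ d (b k) = 0) :
    CliffordAlgebra.contractLeft d (L.map fun k => ι R (a k) * ι R (b k)).prod = 0 := by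
  induction L with
  | nil => exact CliffordAlgebra.contractLeft_one (0 : QuadraticForm R M) d
  | cons k L ih =>
    obtain ⟨hak, hbk⟩ := hL k List.mem_cons_self
    rw [List.map_cons, List.prod_cons, mul_assoc, contractLeft_ι_mul, contractLeft_ι_mul, hak,
      hbk, ih fun j hj => hL j (List.mem_cons_of_mem _ hj)]
    simp

/-- Contracting with `d k` and then `e k` strips the leading factor `ι (a k) * ι (b k)` off
the product. -/
theorem prod_ι_mul_ι_ne_zero [Nontrivial R] {κ : Type*} [DecidableEq κ] (a b : κ → M)
    (d e : κ → Module.Dual R M) (hda : ∀ k j, d k (a j) = if j = k then 1 else 0)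
    (hdb : ∀ k j, d k (b j) = 0) (hea : ∀ k j, e k (a j) = 0)
    (heb : ∀ k j, e k (b j) = if j = k then 1 else 0) {L : List κ} (hL : L.Nodup) :
    (L.map fun k => ι R (a k) * ι R (b k)).prod ≠ 0 := by
  induction L with
  | nil => simp
  | cons k L ih =>
    obtain ⟨hkL, hL⟩ := List.nodup_cons.mp hL
    set x := (L.map fun k => ι R (a k) * ι R (b k)).prod
    have hkill : ∀ f : Module.Dual R M, (∀ j ∈ L, f (a j) = 0 ∧ f (b j) = 0) →
        CliffordAlgebra.contractLeft f x = 0 :=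
      fun f hf => contractLeft_prod_ι_mul_ι_eq_zero a b f L hf
    have hne : ∀ j ∈ L, j ≠ k := fun j hj h => hkL (h ▸ hj)
    have hdx := hkill (d k) fun j hj => ⟨by simp [hda, hne j hj], hdb k j⟩
    have hex := hkill (e k) fun j hj => ⟨hea k j, by simp [heb, hne j hj]⟩
    have hstrip : CliffordAlgebra.contractLeft (e k)
        (CliffordAlgebra.contractLeft (d k) (ι R (a k) * ι R (b k) * x)) = x := by
      rw [mul_assoc, contractLeft_ι_mul, contractLeft_ι_mul, hda, hdb, hdx]
      simp [contractLeft_ι_mul, heb, hex]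
    intro h
    rw [List.map_cons, List.prod_cons] at h
    rw [h, map_zero, map_zero] at hstrip
    exact ih hL hstrip.symm

end ExteriorAlgebra

section CoordinateSubspaces

variable {n : ℕ}

theorem commute_dxyE (i : Fin n) (x : ExteriorAlgebra ℝ (Module.Dual ℝ (Fin n → ℂ))) :
    Commute (dxyE n i) x :=
  commute_ι_mul_ι _ _ x

theorem pullbackI_ι (I : Finset (Fin n)) (φ : Module.Dual ℝ (Fin n → ℂ)) :
    pullbackI n I (ι ℝ φ) = ι ℝ ((coordProj n I).dualMap φ) :=
  map_apply_ι _ _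

theorem pullbackI_dxyE_of_mem {I : Finset (Fin n)} {i : Fin n} (hi : i ∈ I) :
    pullbackI n I (dxyE n i) = 0 := by
  have hx : (coordProj n I).dualMap (dxF n i) = 0 := by
    ext z
    simp [dxF, coordProj, hi]
  rw [dxyE, map_mul, dxE, pullbackI_ι, hx, map_zero, zero_mul]

theorem pullbackI_dxyE_of_notMem {I : Finset (Fin n)} {i : Fin n} (hi : i ∉ I) :
    pullbackI n I (dxyE n i) = dxyE n i := by
  have hx : (coordProj n I).dualMap (dxF n i) = dxF n i := by
    ext z
    simp [dxF, coordProj, hi]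
  have hy : (coordProj n I).dualMap (dyF n i) = dyF n i := by
    ext z
    simp [dyF, coordProj, hi]
  rw [dxyE, map_mul, dxE, dyE, pullbackI_ι, pullbackI_ι, hx, hy]

theorem dualMap_coordProj_sub_dualMap_coordProj_insert {I : Finset (Fin n)} {i : Fin n}
    (hi : i ∉ I) (φ : Module.Dual ℝ (Fin n → ℂ)) :
    (coordProj n I).dualMap φ - (coordProj n (insert i I)).dualMap φ =
      φ (Pi.single i 1) • dxF n i + φ (Pi.single i Complex.I) • dyF n i := by
  refine LinearMap.ext fun z => ?_
  have hz : coordProj n I z - coordProj n (insert i I) z =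
      (z i).re • (Pi.single i 1 : Fin n → ℂ) +
        (z i).im • (Pi.single i Complex.I : Fin n → ℂ) := by
    ext j
    by_cases hj : j = i
    · subst hj
      simp [coordProj, hi]
    · by_cases hjI : j ∈ I <;> simp [coordProj, hj, hjI]
  simp only [LinearMap.sub_apply, LinearMap.dualMap_apply, ← map_sub, hz, map_add, map_smul]
  simp [dxF, dyF, mul_comm]

theorem pullbackI_mul_dxyE_eq_insert {I : Finset (Fin n)} {i : Fin n} (hi : i ∉ I)
    (ω : ExteriorAlgebra ℝ (Module.Dual ℝ (Fin n → ℂ))) :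
    pullbackI n I ω * dxyE n i = pullbackI n (insert i I) ω * dxyE n i := by
  refine algHom_mul_eq_of_ι_mul_eq (fun _ => commute_dxyE i _) (fun φ => ?_) ω
  have hspan : (coordProj n I).dualMap φ - (coordProj n (insert i I)).dualMap φ ∈
      Submodule.span ℝ {dxF n i, dyF n i} :=
    Submodule.mem_span_pair.mpr
      ⟨_, _, (dualMap_coordProj_sub_dualMap_coordProj_insert hi φ).symm⟩
  rw [pullbackI_ι, pullbackI_ι, ← sub_eq_zero, ← sub_mul, ← map_sub]
  exact ι_mul_ι_mul_ι_of_mem_span hspan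

theorem volForm_eq_dxyE_mul {I : Finset (Fin n)} {i : Fin n} (hi : i ∉ I) :
    volForm n I = dxyE n i * volForm n (insert i I) := by
  have hperm : (Iᶜ.sort (· ≤ ·)).Perm (i :: (insert i I)ᶜ.sort (· ≤ ·)) := by
    rw [← Multiset.coe_eq_coe, ← Multiset.cons_coe, Finset.sort_eq, Finset.sort_eq,
      Finset.compl_insert, Finset.erase_val]
    exact (Multiset.cons_erase (by simpa using hi)).symm
  have hcomm : ((Iᶜ.sort (· ≤ ·)).map fun j => dxyE n j).Pairwise Commute :=
    List.pairwise_of_forall_mem_list fun _ ha _ _ => by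
      obtain ⟨j, -, rfl⟩ := List.mem_map.mp ha
      exact commute_dxyE j _
  rw [volForm, (hperm.map _).prod_eq' hcomm, List.map_cons, List.prod_cons, volForm]

theorem volForm_ne_zero (I : Finset (Fin n)) : volForm n I ≠ 0 :=
  prod_ι_mul_ι_ne_zero (dxF n) (dyF n)
    (fun k => Module.Dual.eval ℝ _ (Pi.single k 1))
    (fun k => Module.Dual.eval ℝ _ (Pi.single k Complex.I))
    (fun k j => by simp [dxF, Pi.single_apply, apply_ite])
    (fun k j => by simp [dyF, Pi.single_apply, apply_ite])
    (fun k j => by simp [dxF, Pi.single_apply, apply_ite])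
    (fun k j => by simp [dyF, Pi.single_apply, apply_ite])
    (Finset.sort_nodup _ _)

end CoordinateSubspaces

theorem stmt0_general (n : ℕ) (ω : ExteriorAlgebra ℝ (Module.Dual ℝ (Fin n → ℂ)))
    (hsympl : ∀ I : Finset (Fin n), ∃ c : ℝ, 0 < c ∧
      pullbackI n I ω ^ (n - I.card) = c • volForm n I) :
    ∀ (i : Fin n) (s : ℝ), 0 ≤ s → ∀ I : Finset (Fin n),
      pullbackI n I (ω + s • dxyE n i) ^ (n - I.card) ≠ 0 := by
  intro i s hs I
  obtain ⟨c, hc, hω⟩ := hsympl I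
  by_cases hi : i ∈ I
  · rw [map_add, map_smul, pullbackI_dxyE_of_mem hi, smul_zero, add_zero, hω]
    exact smul_ne_zero hc.ne' (volForm_ne_zero I)
  obtain ⟨c', hc', hω'⟩ := hsympl (insert i I)
  have hcard : I.card < n := by simpa using Finset.card_lt_univ_of_notMem hi
  obtain ⟨m, hm, hm'⟩ : ∃ m, n - I.card = m + 1 ∧ n - (insert i I).card = m :=
    ⟨n - I.card - 1, by omega, by rw [Finset.card_insert_of_notMem hi]; omega⟩
  rw [hm] at hω ⊢
  rw [hm'] at hω'
  have hsq : (s • dxyE n i) * (s • dxyE n i) = 0 := by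
    rw [smul_mul_smul_comm, dxyE, dxE, dyE, ι_mul_ι_mul_self, smul_zero]
  have hlow : pullbackI n I ω ^ m * dxyE n i = c' • volForm n I := by
    rw [← map_pow, pullbackI_mul_dxyE_eq_insert hi, map_pow, hω', smul_mul_assoc,
      ← (commute_dxyE i _).eq, ← volForm_eq_dxyE_mul hi]
  rw [map_add, map_smul, pullbackI_dxyE_of_notMem hi,
    ((commute_dxyE i _).smul_left s).symm.add_pow_succ_of_mul_self_eq_zero hsq, hω,
    mul_smul_comm, hlow, smul_smul, ← Nat.cast_smul_eq_nsmul ℝ, smul_smul, ← add_smul]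
  exact smul_ne_zero (by positivity) (volForm_ne_zero I)

/-- Lemma 3.2: let `Ω` be a linear symplectic form on `ℂ^n` whose restriction
to each coordinate subspace `ℂ^n_I` is nondegenerate with orientation agreeing with the
complex orientation (encoded: the top power of the restriction is a positive multiple of
the complex volume form of `ℂ^n_I`). Then for every `i`, every `s ≥ 0` and every `I`, the
restriction of `Ω + s·dx_i∧dy_i` to `ℂ^n_I` is nondegenerate (nonzero top power). -/
theorem stmt0 (n : ℕ) (ω : ExteriorAlgebra ℝ (Module.Dual ℝ (Fin n → ℂ)))
    (hgrade : ω ∈ grade2 n)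
    (hsympl : ∀ I : Finset (Fin n), ∃ c : ℝ, 0 < c ∧
      pullbackI n I ω ^ (n - I.card) = c • volForm n I) :
    ∀ (i : Fin n) (s : ℝ), 0 ≤ s → ∀ I : Finset (Fin n),
      pullbackI n I (ω + s • dxyE n i) ^ (n - I.card) ≠ 0 :=
  stmt0_general n ω hsympl
end

section
/- Let η: ℝ → [0,1] be any smooth function with η(r) = 0 for r ≤ 0, η(r) = 1 for r ≥ 1, and |η'(r)| ≤ 2 for all r. Fix δ ∈ (0,1) and s ∈ (1,∞), and define χ(r) = η(δe^{4s/δ} − r)·(s − η(r/δ − 1)·(δ/4)·ln(r/δ)) for r > 0, extended by χ(r) = s for r ≤ δ. Then χ is smooth on ℝ_{>0}, satisfies 0 ≤ χ(r) ≤ s, χ(r) = s for r ≤ δ, χ(r) = 0 for r ≥ δe^{4s/δ}, and |χ'(r)|·r ≤ δ for all r > 0. -/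
open Real Set

/-- If `η = 0` on `(-∞,0]`, then `deriv η x = 0` for `x < 0`. -/
lemma stmt19_deriv_zero_neg {η : ℝ → ℝ} (hη0 : ∀ r : ℝ, r ≤ 0 → η r = 0)
    {x : ℝ} (hx : x < 0) : deriv η x = 0 := by
  have h : η =ᶠ[nhds x] fun _ => (0 : ℝ) := by
    filter_upwards [Iio_mem_nhds hx] with y hy using hη0 y (le_of_lt hy)
  rw [h.deriv_eq]
  exact deriv_const _ _

/-- If `η = 1` on `[1,∞)`, then `deriv η x = 0` for `x > 1`. -/
lemma stmt19_deriv_zero_gt_one {η : ℝ → ℝ} (hη1 : ∀ r : ℝ, 1 ≤ r → η r = 1)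
    {x : ℝ} (hx : 1 < x) : deriv η x = 0 := by
  have h : η =ᶠ[nhds x] fun _ => (1 : ℝ) := by
    filter_upwards [Ioi_mem_nhds hx] with y hy using hη1 y (le_of_lt hy)
  rw [h.deriv_eq]
  exact deriv_const _ _

set_option maxHeartbeats 1600000 in
/-- given any smooth cutoff `η` with `η = 0` on `(-∞,0]`, `η = 1` on `[1,∞)`,
`0 ≤ η ≤ 1` and `|η'| ≤ 2`, the function
`χ(r) = η(δe^{4s/δ} − r)·(s − η(r/δ − 1)·(δ/4)·ln(r/δ))` (extended by `s` for `r ≤ δ`)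
is smooth on `ℝ_{>0}`, satisfies `0 ≤ χ ≤ s`, equals `s` for `r ≤ δ`, vanishes for
`r ≥ δe^{4s/δ}`, and satisfies `|χ'(r)|·r ≤ δ` for all `r > 0`. -/
theorem stmt19 (η : ℝ → ℝ) (hη_smooth : ContDiff ℝ (⊤ : ℕ∞) η)
    (hη_range : ∀ r, η r ∈ Icc (0 : ℝ) 1)
    (hη0 : ∀ r : ℝ, r ≤ 0 → η r = 0) (hη1 : ∀ r : ℝ, 1 ≤ r → η r = 1)
    (hη' : ∀ r, |deriv η r| ≤ 2)
    (δ s : ℝ) (hδ : δ ∈ Ioo (0 : ℝ) 1) (hs : s ∈ Ioi (1 : ℝ))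
    (χ : ℝ → ℝ)
    (hχ : ∀ r : ℝ, χ r =
      if r ≤ δ then s
      else η (δ * exp (4 * s / δ) - r) * (s - η (r / δ - 1) * ((δ / 4) * Real.log (r / δ)))) :
    ContDiffOn ℝ (⊤ : ℕ∞) χ (Ioi (0 : ℝ)) ∧
    (∀ r : ℝ, 0 ≤ χ r ∧ χ r ≤ s) ∧
    (∀ r : ℝ, r ≤ δ → χ r = s) ∧
    (∀ r : ℝ, δ * exp (4 * s / δ) ≤ r → χ r = 0) ∧
    (∀ r ∈ Ioi (0 : ℝ), |deriv χ r| * r ≤ δ) := by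
  obtain ⟨hδ0, hδ1⟩ := hδ
  have hs1 : (1 : ℝ) < s := hs
  set R := δ * exp (4 * s / δ) with hRdef
  -- R ≥ 4
  have hR4 : (4 : ℝ) ≤ R := by
    have h1 : 2 / δ ≤ exp (2 * s / δ) := by
      have h2 : 2 * s / δ + 1 ≤ exp (2 * s / δ) := by
        have := Real.add_one_le_exp (2 * s / δ)
        linarith
      have h3 : 2 / δ ≤ 2 * s / δ := by
        rw [div_le_div_iff₀ hδ0 hδ0]; nlinarith
      linarith
    have h4 : exp (4 * s / δ) = exp (2 * s / δ) * exp (2 * s / δ) := by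
      rw [← Real.exp_add]; ring_nf
    have h2δ : δ * (2 / δ) = 2 := by field_simp
    have hδe : 2 ≤ δ * exp (2 * s / δ) := by
      nlinarith [mul_le_mul_of_nonneg_left h1 hδ0.le]
    have he2 : (2:ℝ) ≤ exp (2 * s / δ) := by
      have h22 : (2:ℝ) ≤ 2 / δ := by rw [le_div_iff₀ hδ0]; nlinarith
      linarith
    rw [hRdef, h4]
    nlinarith [hδe, he2]
  have hR0 : 0 < R := by linarith
  -- χ equals the global formula F
  have hχeq : ∀ r : ℝ, χ r = η (R - r) * (s - η (r / δ - 1) * ((δ / 4) * Real.log (r / δ))) := by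
    intro r
    rw [hχ r]
    split_ifs with h
    · have h1 : η (r / δ - 1) = 0 := by
        apply hη0
        have : r / δ ≤ 1 := (div_le_one hδ0).2 h
        linarith
      have h2 : η (R - r) = 1 := by
        apply hη1
        have : r ≤ δ := h
        linarith [hδ1]
      rw [h1, h2]; ring
    · rfl
  have hχF : χ = fun r => η (R - r) * (s - η (r / δ - 1) * ((δ / 4) * Real.log (r / δ))) :=
    funext hχeq
  refine ⟨?_, ?_, ?_, ?_, ?_⟩
  · -- smoothness
    rw [hχF]
    apply ContDiffOn.mul
    · exact (hη_smooth.comp (contDiff_const.sub contDiff_id)).contDiffOn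
    · apply ContDiffOn.sub contDiffOn_const
      apply ContDiffOn.mul
      · exact (hη_smooth.comp ((contDiff_id.div_const δ).sub contDiff_const)).contDiffOn
      · apply ContDiffOn.mul contDiffOn_const
        apply ContDiffOn.comp (Real.contDiffOn_log) ((contDiff_id.div_const δ).contDiffOn)
        intro x hx
        simp only [mem_compl_iff, mem_singleton_iff, id_eq]
        exact ne_of_gt (div_pos hx hδ0)
  · -- bounds
    intro r
    rw [hχeq r]
    by_cases h : r ≤ δ
    · have h1 : η (r / δ - 1) = 0 := by
        apply hη0; have : r / δ ≤ 1 := (div_le_one hδ0).2 h; linarith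
      have h2 : η (R - r) = 1 := by apply hη1; linarith
      rw [h1, h2]
      constructor <;> simp <;> linarith
    · push_neg at h
      have hr0 : 0 < r := hδ0.trans h
      obtain ⟨ha0, ha1⟩ := hη_range (R - r)
      obtain ⟨hb0, hb1⟩ := hη_range (r / δ - 1)
      have hL0 : 0 ≤ Real.log (r / δ) := Real.log_nonneg ((one_le_div hδ0).2 h.le)
      rcases le_or_gt R r with hRr | hRr
      · rw [hη0 (R - r) (by linarith)]
        constructor <;> simp <;> linarith
      · have hLle : Real.log (r / δ) ≤ 4 * s / δ := by
          rw [Real.log_le_iff_le_exp (by positivity)]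
          rw [div_le_iff₀ hδ0]
          linarith [hRr]
        have hkey : δ / 4 * (4 * s / δ) = s := by field_simp
        have ht0 : 0 ≤ η (r / δ - 1) * ((δ / 4) * Real.log (r / δ)) := by positivity
        have ht1 : η (r / δ - 1) * ((δ / 4) * Real.log (r / δ)) ≤ s := by
          have h1 : η (r / δ - 1) * ((δ / 4) * Real.log (r / δ)) ≤ (δ / 4) * Real.log (r / δ) := by
            nlinarith [mul_nonneg (le_of_lt hδ0) hL0]
          have h2 : (δ / 4) * Real.log (r / δ) ≤ δ / 4 * (4 * s / δ) := by
            apply mul_le_mul_of_nonneg_left hLle (by positivity)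
          linarith [hkey ▸ h2]
        constructor
        · exact mul_nonneg ha0 (by linarith)
        · nlinarith [mul_le_mul_of_nonneg_right ha1 (show 0 ≤ s - η (r / δ - 1) * ((δ / 4) * Real.log (r / δ)) by linarith)]
  · -- χ = s for r ≤ δ
    intro r hr
    rw [hχ r, if_pos hr]
  · -- χ = 0 for r ≥ R
    intro r hr
    rw [hχ r, if_neg (by push_neg; linarith)]
    rw [hη0 (R - r) (by linarith)]
    ring
  · -- derivative bound
    intro r hr
    have hr0 : (0:ℝ) < r := hr
    have hrr : r⁻¹ * r = 1 := inv_mul_cancel₀ (ne_of_gt hr0)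
    have hηd : ∀ x : ℝ, HasDerivAt η (deriv η x) x :=
      fun x => (hη_smooth.differentiable (by simp) x).hasDerivAt
    have hf : HasDerivAt (fun x : ℝ => η (R - x)) (deriv η (R - r) * (-1)) r := by
      have := (hηd (R - r)).comp r ((hasDerivAt_id r).const_sub R)
      simpa [Function.comp_def] using this
    have hlin : HasDerivAt (fun x : ℝ => x / δ - 1) (1 / δ) r :=
      ((hasDerivAt_id r).div_const δ).sub_const 1
    have hb : HasDerivAt (fun x : ℝ => η (x / δ - 1)) (deriv η (r / δ - 1) * (1 / δ)) r := by
      have := (hηd (r / δ - 1)).comp r hlin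
      simpa [Function.comp_def] using this
    have hlog : HasDerivAt (fun x : ℝ => Real.log (x / δ)) r⁻¹ r := by
      have h1 : HasDerivAt (fun x : ℝ => Real.log x - Real.log δ) r⁻¹ r :=
        (Real.hasDerivAt_log (ne_of_gt hr0)).sub_const _
      apply h1.congr_of_eventuallyEq
      filter_upwards [eventually_gt_nhds hr0] with x hx
      exact Real.log_div (ne_of_gt hx) (ne_of_gt hδ0)
    have hmul : HasDerivAt (fun x : ℝ => (δ / 4) * Real.log (x / δ)) ((δ / 4) * r⁻¹) r :=
      hlog.const_mul (δ / 4)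
    have hprod : HasDerivAt (fun x : ℝ => η (x / δ - 1) * ((δ / 4) * Real.log (x / δ)))
        (deriv η (r / δ - 1) * (1 / δ) * ((δ / 4) * Real.log (r / δ))
          + η (r / δ - 1) * ((δ / 4) * r⁻¹)) r := hb.mul hmul
    have hg : HasDerivAt (fun x : ℝ => s - η (x / δ - 1) * ((δ / 4) * Real.log (x / δ)))
        (-(deriv η (r / δ - 1) * (1 / δ) * ((δ / 4) * Real.log (r / δ))
          + η (r / δ - 1) * ((δ / 4) * r⁻¹))) r := hprod.const_sub s
    have hF : HasDerivAt (fun x : ℝ => η (R - x) * (s - η (x / δ - 1) * ((δ / 4) * Real.log (x / δ))))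
        (deriv η (R - r) * (-1) * (s - η (r / δ - 1) * ((δ / 4) * Real.log (r / δ)))
          + η (R - r) * (-(deriv η (r / δ - 1) * (1 / δ) * ((δ / 4) * Real.log (r / δ))
            + η (r / δ - 1) * ((δ / 4) * r⁻¹)))) r := hf.mul hg
    have hD : deriv χ r =
        deriv η (R - r) * (-1) * (s - η (r / δ - 1) * ((δ / 4) * Real.log (r / δ)))
          + η (R - r) * (-(deriv η (r / δ - 1) * (1 / δ) * ((δ / 4) * Real.log (r / δ))
            + η (r / δ - 1) * ((δ / 4) * r⁻¹))) := by
      rw [hχF]; exact hF.deriv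
    obtain ⟨ha0, ha1⟩ := hη_range (R - r)
    obtain ⟨hb0, hb1⟩ := hη_range (r / δ - 1)
    have hA2 : |deriv η (R - r)| ≤ 2 := hη' (R - r)
    have hB2 : |deriv η (r / δ - 1)| ≤ 2 := hη' (r / δ - 1)
    set L := Real.log (r / δ) with hLdef
    set A := deriv η (R - r) with hAdef
    set B' := deriv η (r / δ - 1) with hB'def
    set a := η (R - r) with hadef
    set B := η (r / δ - 1) with hBdef
    rw [hD]
    clear hD hF hg hprod hf hb hχF hχeq hχ hmul hlog hlin hηd
    clear_value L A B' a B
    rcases le_or_gt r (2 * δ) with hr2 | hr2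
    · -- transition region near δ
      have hA0 : A = 0 := by
        rw [hAdef]; exact stmt19_deriv_zero_gt_one hη1 (by linarith)
      have ha1' : a = 1 := by
        rw [hadef]; exact hη1 _ (by linarith)
      have hBL : |B' * L| ≤ 2 * Real.log 2 := by
        rcases lt_or_ge r δ with hrd | hrd
        · have hB'0 : B' = 0 := by
            rw [hB'def]
            apply stmt19_deriv_zero_neg hη0
            have : r / δ < 1 := (div_lt_one hδ0).2 hrd
            linarith
          rw [hB'0, zero_mul, abs_zero]
          positivity
        · have hL0 : 0 ≤ L := by
            rw [hLdef]; exact Real.log_nonneg ((one_le_div hδ0).2 hrd)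
          have hL2 : L ≤ Real.log 2 := by
            rw [hLdef]
            have h2 : r / δ ≤ 2 := by rw [div_le_iff₀ hδ0]; linarith
            exact Real.log_le_log (by positivity) h2
          rw [abs_mul, abs_of_nonneg hL0]
          exact mul_le_mul hB2 hL2 hL0 (by norm_num)
      have hDeq : A * (-1) * (s - B * ((δ / 4) * L))
          + a * (-(B' * (1 / δ) * ((δ / 4) * L) + B * ((δ / 4) * r⁻¹)))
          = -(B' * L / 4 + B * (δ / 4) * r⁻¹) := by
        have hδδ : δ⁻¹ * δ = 1 := inv_mul_cancel₀ (ne_of_gt hδ0)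
        rw [hA0, ha1']
        linear_combination (-(B' * L / 4)) * hδδ
      rw [hDeq, abs_neg]
      have h1 : |B' * L / 4 + B * (δ / 4) * r⁻¹| ≤ 2 * Real.log 2 / 4 + (δ / 4) * r⁻¹ := by
        calc |B' * L / 4 + B * (δ / 4) * r⁻¹| ≤ |B' * L / 4| + |B * (δ / 4) * r⁻¹| :=
              abs_add_le _ _
          _ ≤ 2 * Real.log 2 / 4 + (δ / 4) * r⁻¹ := by
              apply add_le_add
              · have e : |B' * L / 4| = |B' * L| / 4 := by
                  rw [abs_div]; norm_num
                rw [e]; linarith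
              · rw [abs_of_nonneg (by positivity)]
                nlinarith [mul_le_mul_of_nonneg_right hb1
                  (show (0:ℝ) ≤ (δ / 4) * r⁻¹ by positivity)]
      have h2 : (2 * Real.log 2 / 4 + (δ / 4) * r⁻¹) * r = Real.log 2 / 2 * r + δ / 4 := by
        linear_combination (δ / 4) * hrr
      have h3 := mul_le_mul_of_nonneg_right h1 hr0.le
      rw [h2] at h3
      have hl2 : Real.log 2 < 0.6931471808 := Real.log_two_lt_d9
      have hl2' : 0 ≤ Real.log 2 := Real.log_nonneg one_le_two
      have h4 : Real.log 2 / 2 * r ≤ Real.log 2 / 2 * (2 * δ) :=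
        mul_le_mul_of_nonneg_left hr2 (by positivity)
      have h5 : Real.log 2 * δ ≤ 0.75 * δ :=
        mul_le_mul_of_nonneg_right (by linarith) hδ0.le
      linarith [h3, h4, h5]
    · -- region r > 2δ
      have hB1 : B = 1 := by
        rw [hBdef]
        apply hη1
        have h2 : (2:ℝ) ≤ r / δ := by rw [le_div_iff₀ hδ0]; linarith
        linarith
      have hB'0 : B' = 0 := by
        rw [hB'def]
        apply stmt19_deriv_zero_gt_one hη1
        have h2 : (2:ℝ) < r / δ := by rw [lt_div_iff₀ hδ0]; linarith
        linarith
      rw [hB1, hB'0]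
      rcases lt_or_ge r (R - 1) with h1 | h1
      · -- middle region
        have hA0 : A = 0 := by
          rw [hAdef]; exact stmt19_deriv_zero_gt_one hη1 (by linarith)
        rw [hA0]
        have hDeq : (0:ℝ) * (-1) * (s - 1 * ((δ / 4) * L))
            + a * (-((0:ℝ) * (1 / δ) * ((δ / 4) * L) + 1 * ((δ / 4) * r⁻¹)))
            = -(a * ((δ / 4) * r⁻¹)) := by ring
        rw [hDeq, abs_neg, abs_of_nonneg (by positivity)]
        have e1 : a * ((δ / 4) * r⁻¹) * r = a * (δ / 4) := by
          linear_combination (a * (δ / 4)) * hrr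
        rw [e1]
        nlinarith [ha0, ha1, hδ0]
      · rcases lt_or_ge R r with h2 | h2
        · -- beyond R : everything vanishes
          have hA0 : A = 0 := by
            rw [hAdef]; exact stmt19_deriv_zero_neg hη0 (by linarith)
          have ha0' : a = 0 := by
            rw [hadef]; exact hη0 _ (by linarith)
          rw [hA0, ha0']
          simp only [zero_mul, mul_zero, neg_mul, add_zero, zero_add, abs_zero, abs_neg]
          norm_num
          positivity
        · -- final transition region R - 1 ≤ r ≤ R
          have hlogR : Real.log R = Real.log δ + 4 * s / δ := by
            rw [hRdef, Real.log_mul (ne_of_gt hδ0) (Real.exp_ne_zero _), Real.log_exp]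
          have hLd : L = Real.log r - Real.log δ := by
            rw [hLdef]; exact Real.log_div (ne_of_gt hr0) (ne_of_gt hδ0)
          have h4s : (δ / 4) * (4 * s / δ) = s := by field_simp
          have key : s - 1 * ((δ / 4) * L) = (δ / 4) * (Real.log R - Real.log r) := by
            rw [hLd]
            linear_combination (-(δ / 4)) * hlogR - h4s
          have hloglog : Real.log r ≤ Real.log R := Real.log_le_log hr0 h2
          have hg0 : 0 ≤ s - 1 * ((δ / 4) * L) := by
            rw [key]
            have : 0 ≤ Real.log R - Real.log r := by linarith
            positivity
          have hgu : s - 1 * ((δ / 4) * L) ≤ (δ / 4) * r⁻¹ := by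
            rw [key]
            have hlog_le : Real.log R - Real.log r ≤ R / r - 1 := by
              have h := Real.log_le_sub_one_of_pos (div_pos hR0 hr0)
              rwa [Real.log_div (ne_of_gt hR0) (ne_of_gt hr0)] at h
            have h5 : R / r - 1 ≤ r⁻¹ := by
              have hRr1 : R - r ≤ 1 := by linarith
              have e : R / r - 1 = (R - r) / r := by
                linear_combination hrr
              rw [e, div_le_iff₀ hr0]
              nlinarith [hrr]
            calc (δ / 4) * (Real.log R - Real.log r) ≤ (δ / 4) * (R / r - 1) :=
                  mul_le_mul_of_nonneg_left hlog_le (by positivity)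
              _ ≤ (δ / 4) * r⁻¹ := mul_le_mul_of_nonneg_left h5 (by positivity)
          have hDeq : A * (-1) * (s - 1 * ((δ / 4) * L))
              + a * (-((0:ℝ) * (1 / δ) * ((δ / 4) * L) + 1 * ((δ / 4) * r⁻¹)))
              = -(A * (s - 1 * ((δ / 4) * L)) + a * ((δ / 4) * r⁻¹)) := by ring
          rw [hDeq, abs_neg]
          have h6 : |A * (s - 1 * ((δ / 4) * L)) + a * ((δ / 4) * r⁻¹)|
              ≤ 2 * ((δ / 4) * r⁻¹) + 1 * ((δ / 4) * r⁻¹) := by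
            calc |A * (s - 1 * ((δ / 4) * L)) + a * ((δ / 4) * r⁻¹)|
                ≤ |A * (s - 1 * ((δ / 4) * L))| + |a * ((δ / 4) * r⁻¹)| := abs_add_le _ _
              _ ≤ 2 * ((δ / 4) * r⁻¹) + 1 * ((δ / 4) * r⁻¹) := by
                  apply add_le_add
                  · rw [abs_mul, abs_of_nonneg hg0]
                    exact mul_le_mul hA2 hgu hg0 (by norm_num)
                  · rw [abs_of_nonneg (by positivity)]
                    have : (0:ℝ) ≤ (δ / 4) * r⁻¹ := by positivity
                    nlinarith
          have h7 : (2 * ((δ / 4) * r⁻¹) + 1 * ((δ / 4) * r⁻¹)) * r = 3 * (δ / 4) := by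
            linear_combination (3 * (δ / 4)) * hrr
          have h8 := mul_le_mul_of_nonneg_right h6 hr0.le
          rw [h7] at h8
          linarith
end
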